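/- arXiv:1912.11756 — 6 statements merged into one kernel-verified Lean document; each statement's English description precedes it below -/
import Mathlib

section
/- Let c > 0, and let ζ⁽⁰⁾, ζ⁽¹⁾, ζ⁽²⁾ be nonzero vectors in the light cone L_c. If ζ⁽⁰⁾, ζ⁽¹⁾, ζ⁽²⁾ are linearly dependent over ℝ, then at least two of the three vectors are linearly dependent (i.e., one can not choose three vectors on the same light cone L_c that are linearly dependent but pairwise linearly independent). -/
/-!
Polarizing the Minkowski form `τ τ' - c² ⟪ξ, ξ'⟫`: if `x`, `y` and `α • x + β • y` with `α β ≠ 0`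
are all null, then `x` and `y` are Minkowski-orthogonal. Two orthogonal null vectors are parallel,
because nullity turns orthogonality into the equality case of Cauchy–Schwarz for the spatial
parts. Hence if `ζ0 = a • ζ1 + b • ζ2` with `ζ1, ζ2` independent, one of `a, b` vanishes and
`ζ0` is parallel to `ζ1` or to `ζ2`.
-/

/-- The light cone `L_c` in `ℝ × EuclideanSpace ℝ (Fin 3)` for wave speed `c`. -/
def lightCone (c : ℝ) : Set (ℝ × EuclideanSpace ℝ (Fin 3)) :=
  {ζ | ζ.1 ^ 2 = c ^ 2 * ‖ζ.2‖ ^ 2}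

open Submodule
open scoped RealInnerProductSpace

/-- `lightCone c` is `nullCone (EuclideanSpace ℝ (Fin 3)) c` by definition. -/
def nullCone (E : Type*) [Norm E] (c : ℝ) : Set (ℝ × E) :=
  {ζ | ζ.1 ^ 2 = c ^ 2 * ‖ζ.2‖ ^ 2}

section NullCone

variable {E : Type*} [NormedAddCommGroup E] {c : ℝ} {x y : ℝ × E}

lemma mem_nullCone : x ∈ nullCone E c ↔ x.1 ^ 2 = c ^ 2 * ‖x.2‖ ^ 2 := Iff.rfl

lemma snd_ne_zero_of_mem_nullCone (hx : x ∈ nullCone E c) (hx0 : x ≠ 0) : x.2 ≠ 0 := by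
  intro h2
  have h1 : x.1 = 0 := by simpa [mem_nullCone, h2] using hx
  exact hx0 (Prod.ext h1 h2)

lemma fst_ne_zero_of_mem_nullCone (hc : c ≠ 0) (hx : x ∈ nullCone E c) (hx0 : x ≠ 0) :
    x.1 ≠ 0 := by
  intro h1
  have : c ^ 2 * ‖x.2‖ ^ 2 ≠ 0 := by
    have := snd_ne_zero_of_mem_nullCone hx hx0
    positivity
  exact this (by simpa [mem_nullCone, h1] using hx.symm)

variable [InnerProductSpace ℝ E]

lemma fst_mul_fst_eq_inner_of_smul_add_smul_mem_nullCone (hx : x ∈ nullCone E c)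
    (hy : y ∈ nullCone E c) {α β : ℝ} (hα : α ≠ 0) (hβ : β ≠ 0)
    (hxy : α • x + β • y ∈ nullCone E c) : x.1 * y.1 = c ^ 2 * ⟪x.2, y.2⟫ := by
  simp only [mem_nullCone, Prod.fst_add, Prod.snd_add, Prod.smul_fst,
    Prod.smul_snd, smul_eq_mul] at hx hy hxy
  rw [norm_add_sq_real, norm_smul, norm_smul, real_inner_smul_left, real_inner_smul_right,
    mul_pow, mul_pow, Real.norm_eq_abs, Real.norm_eq_abs, sq_abs, sq_abs] at hxy
  have h : (2 * α * β) * (x.1 * y.1) = (2 * α * β) * (c ^ 2 * ⟪x.2, y.2⟫) := by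
    linear_combination hxy - α ^ 2 * hx - β ^ 2 * hy
  exact mul_left_cancel₀ (by positivity) h

lemma exists_eq_smul_of_fst_mul_fst_eq_inner (hc : c ≠ 0) (hx : x ∈ nullCone E c)
    (hy : y ∈ nullCone E c) (hx0 : x ≠ 0) (hy0 : y ≠ 0)
    (h : x.1 * y.1 = c ^ 2 * ⟪x.2, y.2⟫) : ∃ r : ℝ, y = r • x := by
  rw [mem_nullCone] at hx hy
  have hcs : ‖⟪x.2, y.2⟫‖ = ‖x.2‖ * ‖y.2‖ := by
    have : (c ^ 2) ^ 2 * ⟪x.2, y.2⟫ ^ 2 = (c ^ 2) ^ 2 * (‖x.2‖ * ‖y.2‖) ^ 2 := by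
      linear_combination (-(x.1 * y.1 + c ^ 2 * ⟪x.2, y.2⟫)) * h + y.1 ^ 2 * hx
        + c ^ 2 * ‖x.2‖ ^ 2 * hy
    rw [Real.norm_eq_abs, ← abs_of_nonneg (by positivity : 0 ≤ ‖x.2‖ * ‖y.2‖)]
    exact sq_eq_sq_iff_abs_eq_abs _ _ |>.1 (mul_left_cancel₀ (by positivity) this)
  obtain ⟨r, -, hr⟩ := (norm_inner_eq_norm_iff (snd_ne_zero_of_mem_nullCone hx hx0)
    (snd_ne_zero_of_mem_nullCone hy hy0)).1 hcs
  have hfst : x.1 * y.1 = x.1 * (r * x.1) := by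
    rw [h, hr, real_inner_smul_right, real_inner_self_eq_norm_sq]
    linear_combination (-r) * hx
  exact ⟨r, Prod.ext (mul_left_cancel₀ (fst_ne_zero_of_mem_nullCone hc hx hx0) hfst) hr⟩

lemma eq_zero_or_eq_zero_of_smul_add_smul_mem_nullCone (hc : c ≠ 0) (hx : x ∈ nullCone E c)
    (hy : y ∈ nullCone E c) (hxy : LinearIndependent ℝ ![x, y]) {α β : ℝ}
    (h : α • x + β • y ∈ nullCone E c) : α = 0 ∨ β = 0 := by
  by_contra! hαβ
  obtain ⟨r, hr⟩ := exists_eq_smul_of_fst_mul_fst_eq_inner hc hx hy (hxy.ne_zero 0)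
    (hxy.ne_zero 1) (fst_mul_fst_eq_inner_of_smul_add_smul_mem_nullCone hx hy hαβ.1 hαβ.2 h)
  exact neg_ne_zero.2 one_ne_zero (LinearIndependent.pair_iff.1 hxy r (-1) (by rw [hr]; module)).2

end NullCone

theorem stmt_2_general (c : ℝ) (hc : 0 < c) (ζ0 ζ1 ζ2 : ℝ × EuclideanSpace ℝ (Fin 3))
    (hc0 : ζ0 ∈ lightCone c) (hc1 : ζ1 ∈ lightCone c) (hc2 : ζ2 ∈ lightCone c)
    (hdep : ¬ LinearIndependent ℝ ![ζ0, ζ1, ζ2]) :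
    ¬ LinearIndependent ℝ ![ζ0, ζ1] ∨ ¬ LinearIndependent ℝ ![ζ0, ζ2] ∨
      ¬ LinearIndependent ℝ ![ζ1, ζ2] := by
  by_contra! ⟨h01, h02, h12⟩
  have hspan : ζ0 ∈ span ℝ {ζ1, ζ2} := by
    by_contra h
    exact hdep (linearIndependent_finCons.2 ⟨h12, by rwa [Matrix.range_cons_cons_empty]⟩)
  obtain ⟨a, b, rfl⟩ := mem_span_pair.1 hspan
  rcases eq_zero_or_eq_zero_of_smul_add_smul_mem_nullCone hc.ne' hc1 hc2 h12 hc0 with rfl | rfl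
  · exact one_ne_zero (LinearIndependent.pair_iff.1 h02 1 (-b) (by module)).1
  · exact one_ne_zero (LinearIndependent.pair_iff.1 h01 1 (-a) (by module)).1

theorem stmt_2 (c : ℝ) (hc : 0 < c) (ζ0 ζ1 ζ2 : ℝ × EuclideanSpace ℝ (Fin 3))
    (h0 : ζ0 ≠ 0) (h1 : ζ1 ≠ 0) (h2 : ζ2 ≠ 0)
    (hc0 : ζ0 ∈ lightCone c) (hc1 : ζ1 ∈ lightCone c) (hc2 : ζ2 ∈ lightCone c)
    (hdep : ¬ LinearIndependent ℝ ![ζ0, ζ1, ζ2]) :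
    ¬ LinearIndependent ℝ ![ζ0, ζ1] ∨ ¬ LinearIndependent ℝ ![ζ0, ζ2] ∨
      ¬ LinearIndependent ℝ ![ζ1, ζ2] :=
  stmt_2_general c hc ζ0 ζ1 ζ2 hc0 hc1 hc2 hdep
end

section
/- Let E be a finite-dimensional real inner product space, p ∈ E, and let ψ₀, ψ₁, ψ₂ : E → ℂ be twice continuously differentiable on a neighborhood of p. Assume: (i) ψ_k(p) = 0 for k = 0, 1, 2; (ii) Dψ₀(p) + Dψ₁(p) + Dψ₂(p) = 0, where Dψ_k(p) denotes the Fréchet derivative at p; (iii) Im ψ_k(q) ≥ 0 for all q in a neighborhood of p and each k = 0, 1, 2; (iv) there exist linearly independent vectors v₀, v₂ ∈ E such that for k ∈ {0, 2} the Hessian quadratic form X ↦ D²(Im ψ_k)(p)[X, X] is strictly positive for every X ∈ E not in the real span of v_k. Then S := ψ₀ + ψ₁ + ψ₂ satisfies: (1) S(p) = 0; (2) DS(p) = 0; (3) there exist a constant c > 0 and a neighborhood U of p such that Im S(q) ≥ c ‖q − p‖² for all q ∈ U. -/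
/-!
Write `f₀ = Im ψ₀` and `f₂ = Im ψ₂`. Both are nonnegative near `p` and vanish at `p`, so `p` is a
local minimum of each; hence their gradients vanish and their Hessians are positive semidefinite.
Since `span {v₀} ∩ span {v₂} = 0`, every nonzero `X` lies outside one of the two lines, so the
Hessian of `f₀ + f₂` is positive definite, hence coercive on the finite-dimensional space `E`.
Second-order Taylor expansion then gives `f₀ + f₂ ≥ c ‖q - p‖²` near `p`, and `Im ψ₁ ≥ 0` only
helps.
-/

open Filter Topology Asymptotics

section SecondOrder

variable {E F : Type*} [NormedAddCommGroup E] [NormedSpace ℝ E] [NormedAddCommGroup F]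
  [NormedSpace ℝ F]

theorem hasFDerivAt_half_apply_sub_sub {B : E →L[ℝ] E →L[ℝ] F} (hB : ∀ v w, B v w = B w v)
    (p x : E) : HasFDerivAt (fun y => (2⁻¹ : ℝ) • B (y - p) (y - p)) (B (x - p)) x := by
  have hsub := (hasFDerivAt_id (𝕜 := ℝ) x).sub_const p
  convert (B.hasFDerivAt_of_bilinear hsub hsub).const_smul (2⁻¹ : ℝ) using 1
  · rfl
  · ext v
    simp only [FunLike.coe_smul, Pi.smul_apply, add_apply,
      ContinuousLinearMap.precompR_apply, ContinuousLinearMap.precompL_apply,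
      ContinuousLinearMap.compL_apply, ContinuousLinearMap.comp_id, ContinuousLinearMap.id_apply,
      id_eq, hB v]
    rw [← two_smul ℝ, smul_smul, inv_mul_cancel₀ two_ne_zero, one_smul]

theorem ContDiffAt.isLittleO_sub_taylor_two {f : E → F} {p : E} (hf : ContDiffAt ℝ 2 f p) :
    (fun q => f q - f p - fderiv ℝ f p (q - p) -
        (2⁻¹ : ℝ) • fderiv ℝ (fderiv ℝ f) p (q - p) (q - p)) =o[𝓝 p] fun q => ‖q - p‖ ^ 2 := by
  set B := fderiv ℝ (fderiv ℝ f) p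
  have hB : ∀ v w, B v w = B w v :=
    hf.isSymmSndFDerivAt (by simp [minSmoothness_of_isRCLikeNormedField])
  have hf' : ∀ᶠ x in 𝓝 p, HasFDerivAt f (fderiv ℝ f x) x := by
    filter_upwards [hf.eventually (by simp)] with x hx
    exact (hx.differentiableAt two_ne_zero).hasFDerivAt
  have hf'' : HasFDerivAt (fderiv ℝ f) B p :=
    ((hf.fderiv_right (m := 1) (by norm_num)).differentiableAt one_ne_zero).hasFDerivAt
  -- The remainder has derivative `f' x - f' p - B (x - p) = o(x - p)`; apply the mean value
  -- inequality on the segment `[p, q]`.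
  refine isLittleO_iff.2 fun ε hε => ?_
  obtain ⟨δ, hδ, hball⟩ := Metric.eventually_nhds_iff_ball.1
    (hf'.and (isLittleO_iff.1 hf''.isLittleO hε))
  filter_upwards [Metric.ball_mem_nhds p hδ] with q hq
  have hseg : segment ℝ p q ⊆ Metric.ball p δ :=
    (convex_ball p δ).segment_subset (Metric.mem_ball_self hδ) hq
  have hder : ∀ x ∈ segment ℝ p q, HasFDerivWithinAt
      (fun y => f y - fderiv ℝ f p (y - p) - (2⁻¹ : ℝ) • B (y - p) (y - p))
      (fderiv ℝ f x - fderiv ℝ f p - B (x - p)) (segment ℝ p q) x := fun x hx =>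
    (((hball x (hseg hx)).1.sub ((fderiv ℝ f p).hasFDerivAt.comp x
      ((hasFDerivAt_id x).sub_const p))).sub
      (hasFDerivAt_half_apply_sub_sub hB p x)).hasFDerivWithinAt
  have hbound : ∀ x ∈ segment ℝ p q,
      ‖fderiv ℝ f x - fderiv ℝ f p - B (x - p)‖ ≤ ε * ‖q - p‖ := by
    intro x hx
    refine ((hball x (hseg hx)).2).trans (mul_le_mul_of_nonneg_left ?_ hε.le)
    rw [← dist_eq_norm, ← dist_eq_norm, dist_comm x, dist_comm q]
    linarith [dist_add_dist_of_mem_segment hx, dist_nonneg (x := x) (y := q)]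
  have := Convex.norm_image_sub_le_of_norm_hasFDerivWithin_le hder hbound
    (convex_segment p q) (left_mem_segment ℝ p q) (right_mem_segment ℝ p q)
  simp only [sub_self, map_zero, smul_zero, sub_zero] at this
  rw [Real.norm_of_nonneg (by positivity), sq, ← mul_assoc]
  convert this using 2
  abel

theorem IsLocalMin.fderiv_fderiv_apply_self_nonneg {f : E → ℝ} {p : E} (hmin : IsLocalMin f p)
    (hf : ContDiffAt ℝ 2 f p) (X : E) : 0 ≤ fderiv ℝ (fderiv ℝ f) p X X := by
  -- If `a < 0`, then `f (p + t • X) - f p = t² a / 2 + o(t²) < 0` for small `t ≠ 0`.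
  by_contra! hneg
  set a := fderiv ℝ (fderiv ℝ f) p X X
  have hline : Tendsto (fun t : ℝ => p + t • X) (𝓝 0) (𝓝 p) := by
    simpa using ((continuous_id.smul continuous_const).const_add p).tendsto (0 : ℝ)
  have hsmall : (fun t : ℝ => f (p + t • X) - f p - (2⁻¹ : ℝ) • (t ^ 2 * a)) =o[𝓝 0]
      fun t => t ^ 2 := by
    refine ((hf.isLittleO_sub_taylor_two.comp_tendsto hline).congr_left fun t => ?_).trans_isBigO
      (IsBigO.of_bound (‖X‖ ^ 2) (Eventually.of_forall fun t => ?_))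
    · simp only [Function.comp_apply, add_sub_cancel_left, hmin.fderiv_eq_zero, map_smul,
        smul_apply, zero_apply, smul_eq_mul, sub_zero, a]
      ring
    · simp [norm_smul, mul_pow, mul_comm]
  obtain ⟨t, ⟨hbound, hmin_t⟩, ht⟩ := ((((hsmall.bound (c := -a / 4) (by linarith)).and
    (hline.eventually hmin)).filter_mono nhdsWithin_le_nhds).and
      (self_mem_nhdsWithin (s := {0}ᶜ))).exists
  rw [Real.norm_eq_abs, norm_pow, Real.norm_eq_abs, sq_abs, smul_eq_mul] at hbound
  nlinarith [(abs_le.1 hbound).2, pow_pos (abs_pos.2 ht) 2, sq_abs t]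

theorem ContDiffAt.exists_eventually_add_mul_norm_sub_sq_le {f : E → ℝ} {p : E}
    (hf : ContDiffAt ℝ 2 f p) (hf' : fderiv ℝ f p = 0)
    (hB : IsCoercive (fderiv ℝ (fderiv ℝ f) p)) :
    ∃ c > 0, ∀ᶠ q in 𝓝 p, f p + c * ‖q - p‖ ^ 2 ≤ f q := by
  obtain ⟨C, hC, hCB⟩ := hB
  refine ⟨C / 4, by positivity, ?_⟩
  filter_upwards [hf.isLittleO_sub_taylor_two.bound (by positivity : 0 < C / 4)] with q hq
  rw [hf', Real.norm_eq_abs, norm_pow, norm_norm] at hq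
  have := hCB (q - p)
  simp only [zero_apply, sub_zero, smul_eq_mul] at hq
  nlinarith [(abs_le.1 hq).1]

end SecondOrder

theorem isCoercive_of_apply_self_pos {E : Type*} [NormedAddCommGroup E] [NormedSpace ℝ E]
    [FiniteDimensional ℝ E] {B : E →L[ℝ] E →L[ℝ] ℝ} (hB : ∀ u ≠ 0, 0 < B u u) :
    IsCoercive B := by
  rcases subsingleton_or_nontrivial E with hE | hE
  · exact ⟨1, one_pos, fun u => by simp [Subsingleton.elim u 0]⟩
  have hcont : Continuous fun u => B u u := by fun_prop
  obtain ⟨w, hw, hmin⟩ := (isCompact_sphere (0 : E) 1).exists_isMinOn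
    (NormedSpace.sphere_nonempty.2 zero_le_one) hcont.continuousOn
  rw [mem_sphere_zero_iff_norm] at hw
  refine ⟨B w w, hB w (norm_ne_zero_iff.1 (by simp [hw])), fun u => ?_⟩
  rcases eq_or_ne u 0 with rfl | hu
  · simp
  have hu' : ‖u‖ ≠ 0 := norm_ne_zero_iff.2 hu
  have hunit : ‖u‖⁻¹ • u ∈ Metric.sphere (0 : E) 1 := by
    simp [norm_smul, hu']
  have hscale : B u u = ‖u‖ * ‖u‖ * B (‖u‖⁻¹ • u) (‖u‖⁻¹ • u) := by
    simp [field]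
  rw [hscale, mul_assoc, mul_comm]
  exact mul_le_mul_of_nonneg_left (isMinOn_iff.1 hmin _ hunit) (by positivity)

theorem add_pos_of_pos_off_span_singleton {R M : Type*} [Ring R] [AddCommGroup M] [Module R M]
    {Q₀ Q₁ : M → ℝ} {v₀ v₁ : M} (hv : LinearIndependent R ![v₀, v₁])
    (hQ₀ : ∀ x, 0 ≤ Q₀ x) (hQ₁ : ∀ x, 0 ≤ Q₁ x)
    (hQ₀' : ∀ x ∉ Submodule.span R {v₀}, 0 < Q₀ x)
    (hQ₁' : ∀ x ∉ Submodule.span R {v₁}, 0 < Q₁ x)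
    {x : M} (hx : x ≠ 0) : 0 < Q₀ x + Q₁ x := by
  have hdisj : Disjoint (Submodule.span R {v₀}) (Submodule.span R {v₁}) := by
    simpa [Set.image_singleton] using
      hv.disjoint_span_image (s := {0}) (t := {1}) (by simp)
  by_cases h₀ : x ∈ Submodule.span R {v₀}
  · have h₁ : x ∉ Submodule.span R {v₁} := fun h₁ =>
      hx (Submodule.disjoint_def.1 hdisj x h₀ h₁)
    linarith [hQ₀ x, hQ₁' x h₁]
  · linarith [hQ₀' x h₀, hQ₁ x]

theorem stmt_4 (E : Type*) [NormedAddCommGroup E] [InnerProductSpace ℝ E]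
    [FiniteDimensional ℝ E] (p : E) (ψ0 ψ1 ψ2 : E → ℂ)
    (hreg0 : ContDiffAt ℝ 2 ψ0 p) (hreg1 : ContDiffAt ℝ 2 ψ1 p)
    (hreg2 : ContDiffAt ℝ 2 ψ2 p)
    (hval0 : ψ0 p = 0) (hval1 : ψ1 p = 0) (hval2 : ψ2 p = 0)
    (hgrad : fderiv ℝ ψ0 p + fderiv ℝ ψ1 p + fderiv ℝ ψ2 p = 0)
    (him0 : ∀ᶠ q in 𝓝 p, 0 ≤ (ψ0 q).im)
    (him1 : ∀ᶠ q in 𝓝 p, 0 ≤ (ψ1 q).im)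
    (him2 : ∀ᶠ q in 𝓝 p, 0 ≤ (ψ2 q).im)
    (v0 v2 : E) (hv : LinearIndependent ℝ ![v0, v2])
    (hHess0 : ∀ X : E, X ∉ Submodule.span ℝ {v0} →
      0 < iteratedFDeriv ℝ 2 (fun q => (ψ0 q).im) p ![X, X])
    (hHess2 : ∀ X : E, X ∉ Submodule.span ℝ {v2} →
      0 < iteratedFDeriv ℝ 2 (fun q => (ψ2 q).im) p ![X, X]) :
    (fun q => ψ0 q + ψ1 q + ψ2 q) p = 0 ∧
    fderiv ℝ (fun q => ψ0 q + ψ1 q + ψ2 q) p = 0 ∧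
    ∃ c : ℝ, 0 < c ∧ ∀ᶠ q in 𝓝 p,
      c * ‖q - p‖ ^ 2 ≤ ((fun q => ψ0 q + ψ1 q + ψ2 q) q).im := by
  have hd0 := hreg0.differentiableAt two_ne_zero
  have hd1 := hreg1.differentiableAt two_ne_zero
  refine ⟨by simp [hval0, hval1, hval2], ?_, ?_⟩
  · rwa [fderiv_fun_add (hd0.fun_add hd1) (hreg2.differentiableAt two_ne_zero),
      fderiv_fun_add hd0 hd1]
  set f0 : E → ℝ := fun q => (ψ0 q).im
  set f2 : E → ℝ := fun q => (ψ2 q).im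
  have hf0 : ContDiffAt ℝ 2 f0 p := Complex.imCLM.contDiff.contDiffAt.comp p hreg0
  have hf2 : ContDiffAt ℝ 2 f2 p := Complex.imCLM.contDiff.contDiffAt.comp p hreg2
  have hmin0 : IsLocalMin f0 p := by simpa [IsLocalMin, IsMinFilter, f0, hval0] using him0
  have hmin2 : IsLocalMin f2 p := by simpa [IsLocalMin, IsMinFilter, f2, hval2] using him2
  simp only [iteratedFDeriv_two_apply, Matrix.cons_val_zero, Matrix.cons_val_one] at hHess0 hHess2
  have hpos : ∀ X ≠ 0, 0 < fderiv ℝ (fderiv ℝ fun q => f0 q + f2 q) p X X := fun X hX => by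
    have hsplit := congrArg (· ![X, X]) (fun_iteratedFDeriv_add_apply hf0 hf2)
    simp only [iteratedFDeriv_two_apply, Matrix.cons_val_zero, Matrix.cons_val_one,
      add_apply] at hsplit
    rw [hsplit]
    exact add_pos_of_pos_off_span_singleton hv (hmin0.fderiv_fderiv_apply_self_nonneg hf0)
      (hmin2.fderiv_fderiv_apply_self_nonneg hf2) hHess0 hHess2 hX
  obtain ⟨c, hc, hgrowth⟩ := (hf0.add hf2).exists_eventually_add_mul_norm_sub_sq_le
    (hmin0.add hmin2).fderiv_eq_zero (isCoercive_of_apply_self_pos hpos)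
  refine ⟨c, hc, ?_⟩
  filter_upwards [hgrowth, him1] with q hq h1
  simp only [f0, f2, hval0, hval2, Complex.zero_im, add_zero] at hq
  simp only [Complex.add_im]
  linarith
end

section
/- Let Y, Z : ℝ → Matrix (Fin 3) (Fin 3) ℂ be differentiable functions satisfying Y'(τ) = C · Z(τ) and Z'(τ) = −D(τ) · Y(τ) for all τ ∈ ℝ, with Z(0) = H₀ · Y(0) for a symmetric complex matrix H₀ with Im H₀ positive definite, and assume Y(τ) is invertible for every τ ∈ ℝ. Set H(τ) := Z(τ) · Y(τ)⁻¹. Then the real-valued function τ ↦ det(Im H(τ)) · |det Y(τ)|² is constant on ℝ. -/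
open Matrix

/-!
Because `C` and `D τ` are real symmetric, the two Wronskians `Yᵀ Z - Zᵀ Y` and `Yᴴ Z - Zᴴ Y` of
the Hamiltonian system are constant. The first vanishes at `τ = 0` since `H₀` is symmetric, so
`H = Z Y⁻¹` stays symmetric; hence `Zᴴ = Yᴴ H̄` and `Yᴴ Z - Zᴴ Y = Yᴴ (H - H̄) Y = 2i Yᴴ (Im H) Y`,
whose determinant is `(2i)³ det (Im H) |det Y|²`.
-/

variable {l m n : Type*}

def HasEntrywiseDerivAt (f : ℝ → Matrix m n ℂ) (f' : Matrix m n ℂ) (τ : ℝ) : Prop :=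
  ∀ i j, HasDerivAt (fun t => f t i j) (f' i j) τ

namespace HasEntrywiseDerivAt

variable {τ : ℝ}

theorem transpose {f : ℝ → Matrix m n ℂ} {f' : Matrix m n ℂ} (hf : HasEntrywiseDerivAt f f' τ) :
    HasEntrywiseDerivAt (fun t => (f t)ᵀ) f'ᵀ τ :=
  fun i j => hf j i

theorem conjTranspose {f : ℝ → Matrix m n ℂ} {f' : Matrix m n ℂ}
    (hf : HasEntrywiseDerivAt f f' τ) : HasEntrywiseDerivAt (fun t => (f t)ᴴ) f'ᴴ τ :=
  fun i j => (hf j i).star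

theorem sub {f g : ℝ → Matrix m n ℂ} {f' g' : Matrix m n ℂ} (hf : HasEntrywiseDerivAt f f' τ)
    (hg : HasEntrywiseDerivAt g g' τ) : HasEntrywiseDerivAt (fun t => f t - g t) (f' - g') τ :=
  fun i j => (hf i j).sub (hg i j)

theorem mul [Fintype m] {f : ℝ → Matrix l m ℂ} {g : ℝ → Matrix m n ℂ} {f' : Matrix l m ℂ}
    {g' : Matrix m n ℂ} (hf : HasEntrywiseDerivAt f f' τ) (hg : HasEntrywiseDerivAt g g' τ) :
    HasEntrywiseDerivAt (fun t => f t * g t) (f' * g τ + f τ * g') τ := by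
  intro i j
  simp only [mul_apply, Matrix.add_apply, ← Finset.sum_add_distrib]
  exact HasDerivAt.fun_sum fun k _ => (hf i k).mul (hg k j)

end HasEntrywiseDerivAt

theorem eq_of_hasEntrywiseDerivAt_zero {f : ℝ → Matrix m n ℂ}
    (hf : ∀ τ, HasEntrywiseDerivAt f 0 τ) (τ σ : ℝ) : f τ = f σ := by
  ext i j
  exact is_const_of_deriv_eq_zero (fun t => (hf t i j).differentiableAt)
    (fun t => (hf t i j).deriv) τ σ

section Hamiltonian

variable [Fintype n] {C : Matrix n n ℂ} {D Y Z : ℝ → Matrix n n ℂ}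

theorem transpose_mul_sub_transpose_mul_const (hC : C.IsSymm) (hD : ∀ τ, (D τ).IsSymm)
    (hY : ∀ τ, HasEntrywiseDerivAt Y (C * Z τ) τ)
    (hZ : ∀ τ, HasEntrywiseDerivAt Z (-(D τ * Y τ)) τ) (τ σ : ℝ) :
    (Y τ)ᵀ * Z τ - (Z τ)ᵀ * Y τ = (Y σ)ᵀ * Z σ - (Z σ)ᵀ * Y σ := by
  refine eq_of_hasEntrywiseDerivAt_zero (f := fun t => (Y t)ᵀ * Z t - (Z t)ᵀ * Y t)
    (fun t => ?_) τ σ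
  convert ((hY t).transpose.mul (hZ t)).sub ((hZ t).transpose.mul (hY t)) using 1
  rw [transpose_mul, transpose_neg, transpose_mul, hC.eq, (hD t).eq]
  noncomm_ring

theorem conjTranspose_mul_sub_conjTranspose_mul_const (hC : C.IsHermitian)
    (hD : ∀ τ, (D τ).IsHermitian) (hY : ∀ τ, HasEntrywiseDerivAt Y (C * Z τ) τ)
    (hZ : ∀ τ, HasEntrywiseDerivAt Z (-(D τ * Y τ)) τ) (τ σ : ℝ) :
    (Y τ)ᴴ * Z τ - (Z τ)ᴴ * Y τ = (Y σ)ᴴ * Z σ - (Z σ)ᴴ * Y σ := by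
  refine eq_of_hasEntrywiseDerivAt_zero (f := fun t => (Y t)ᴴ * Z t - (Z t)ᴴ * Y t)
    (fun t => ?_) τ σ
  convert ((hY t).conjTranspose.mul (hZ t)).sub ((hZ t).conjTranspose.mul (hY t)) using 1
  rw [conjTranspose_mul, conjTranspose_neg, conjTranspose_mul, hC.eq, (hD t).eq]
  noncomm_ring

end Hamiltonian

theorem sub_map_star_eq_smul_map_im (H : Matrix m n ℂ) :
    H - H.map star = (2 * Complex.I) • (H.map Complex.im).map Complex.ofReal := by
  ext i j
  simp only [Matrix.sub_apply, map_apply, Matrix.smul_apply, smul_eq_mul, Complex.star_def,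
    Complex.sub_conj]
  push_cast
  ring

section Algebra

variable [Fintype n] [DecidableEq n]

theorem isSymm_mul_inv_of_transpose_mul_eq {α : Type*} [CommRing α] {Y Z : Matrix n n α}
    (hY : IsUnit Y) (h : Zᵀ * Y = Yᵀ * Z) : (Z * Y⁻¹).IsSymm := by
  have hYY : Y * Y⁻¹ = 1 := mul_nonsing_inv Y ((isUnit_iff_isUnit_det Y).mp hY)
  calc (Z * Y⁻¹)ᵀ = Y⁻¹ᵀ * (Zᵀ * Y) * Y⁻¹ := by
        rw [transpose_mul, Matrix.mul_assoc, Matrix.mul_assoc, hYY, Matrix.mul_one]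
    _ = (Y * Y⁻¹)ᵀ * Z * Y⁻¹ := by
        rw [h, transpose_mul]
        simp only [Matrix.mul_assoc]
    _ = Z * Y⁻¹ := by rw [hYY, transpose_one, Matrix.one_mul]

theorem det_map_ofReal (A : Matrix n n ℝ) : (A.map Complex.ofReal).det = A.det :=
  (RingHom.map_det Complex.ofRealHom A).symm

theorem det_conjTranspose_mul_mul (A Y : Matrix n n ℂ) :
    (Yᴴ * A * Y).det = A.det * ‖Y.det‖ ^ 2 := by
  rw [det_mul, det_mul, det_conjTranspose, ← Complex.conj_mul', Complex.star_def]
  ring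

theorem det_conjTranspose_mul_sub_conjTranspose_mul {Y Z : Matrix n n ℂ} (hY : IsUnit Y)
    (hH : (Z * Y⁻¹).IsSymm) :
    (Yᴴ * Z - Zᴴ * Y).det =
      (2 * Complex.I) ^ Fintype.card n * (((Z * Y⁻¹).map Complex.im).det * ‖Y.det‖ ^ 2 : ℝ) := by
  set H := Z * Y⁻¹
  have hZ : Z = H * Y := by
    rw [Matrix.mul_assoc, nonsing_inv_mul Y ((isUnit_iff_isUnit_det Y).mp hY), Matrix.mul_one]
  have hHstar : Hᴴ = H.map star := by rw [conjTranspose, hH.eq]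
  have hW : Yᴴ * Z - Zᴴ * Y = Yᴴ * (H - H.map star) * Y := by
    rw [hZ, conjTranspose_mul, hHstar]
    noncomm_ring
  rw [hW, det_conjTranspose_mul_mul, sub_map_star_eq_smul_map_im, det_smul, det_map_ofReal]
  push_cast
  ring

end Algebra

theorem stmt_7_general
    (C : Matrix (Fin 3) (Fin 3) ℂ) (hC : C = Matrix.diagonal ![0, 2, 2])
    (D : ℝ → Matrix (Fin 3) (Fin 3) ℝ)
    (hDsymm : ∀ τ, (D τ)ᵀ = D τ)
    (Y Z : ℝ → Matrix (Fin 3) (Fin 3) ℂ)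
    (hY : ∀ (τ : ℝ) (i j : Fin 3),
      HasDerivAt (fun t => Y t i j) ((C * Z τ) i j) τ)
    (hZ : ∀ (τ : ℝ) (i j : Fin 3),
      HasDerivAt (fun t => Z t i j) ((-(((D τ).map Complex.ofReal) * Y τ)) i j) τ)
    (H0 : Matrix (Fin 3) (Fin 3) ℂ) (hH0symm : H0ᵀ = H0)
    (hZ0 : Z 0 = H0 * Y 0)
    (hYinv : ∀ τ : ℝ, IsUnit (Y τ)) :
    ∀ τ σ : ℝ,
      ((Z τ * (Y τ)⁻¹).map Complex.im).det * ‖(Y τ).det‖ ^ 2 =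
      ((Z σ * (Y σ)⁻¹).map Complex.im).det * ‖(Y σ).det‖ ^ 2 := by
  have hCS : C.IsSymm := hC ▸ isSymm_diagonal _
  have hCH : C.IsHermitian := hC ▸ isHermitian_diagonal_of_self_adjoint _ (by
    ext i; fin_cases i <;> simp)
  have hDS : ∀ τ, ((D τ).map Complex.ofReal).IsSymm := fun τ => IsSymm.map (hDsymm τ) _
  have hDH : ∀ τ, ((D τ).map Complex.ofReal).IsHermitian := fun τ =>
    (isHermitian_iff_isSymm.mpr (hDsymm τ)).map _ fun _ => by simp
  have hH : ∀ τ, (Z τ * (Y τ)⁻¹).IsSymm := by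
    intro τ
    refine isSymm_mul_inv_of_transpose_mul_eq (hYinv τ) (sub_eq_zero.mp ?_).symm
    rw [transpose_mul_sub_transpose_mul_const hCS hDS hY hZ τ 0, hZ0, transpose_mul, hH0symm,
      Matrix.mul_assoc, sub_self]
  intro τ σ
  have h := congrArg det (conjTranspose_mul_sub_conjTranspose_mul_const hCH hDH hY hZ τ σ)
  rw [det_conjTranspose_mul_sub_conjTranspose_mul (hYinv τ) (hH τ),
    det_conjTranspose_mul_sub_conjTranspose_mul (hYinv σ) (hH σ)] at h
  exact_mod_cast mul_left_cancel₀ (by simp) h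

theorem stmt_7
    (C : Matrix (Fin 3) (Fin 3) ℂ) (hC : C = Matrix.diagonal ![0, 2, 2])
    (D : ℝ → Matrix (Fin 3) (Fin 3) ℝ)
    (hDcont : ∀ i j, Continuous (fun τ => D τ i j))
    (hDsymm : ∀ τ, (D τ)ᵀ = D τ)
    (Y Z : ℝ → Matrix (Fin 3) (Fin 3) ℂ)
    (hY : ∀ (τ : ℝ) (i j : Fin 3),
      HasDerivAt (fun t => Y t i j) ((C * Z τ) i j) τ)
    (hZ : ∀ (τ : ℝ) (i j : Fin 3),
      HasDerivAt (fun t => Z t i j) ((-(((D τ).map Complex.ofReal) * Y τ)) i j) τ)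
    (H0 : Matrix (Fin 3) (Fin 3) ℂ) (hH0symm : H0ᵀ = H0)
    (hH0pos : (H0.map Complex.im).PosDef)
    (hZ0 : Z 0 = H0 * Y 0)
    (hYinv : ∀ τ : ℝ, IsUnit (Y τ)) :
    ∀ τ σ : ℝ,
      ((Z τ * (Y τ)⁻¹).map Complex.im).det * ‖(Y τ).det‖ ^ 2 =
      ((Z σ * (Y σ)⁻¹).map Complex.im).det * ‖(Y σ).det‖ ^ 2 :=
  stmt_7_general C hC D hDsymm Y Z hY hZ H0 hH0symm hZ0 hYinv
end

section
/- Let λ, μ, 𝒜, ℬ, 𝒞 ∈ ℝ. Let ξ⁽⁰⁾, ξ⁽¹⁾, ξ⁽²⁾, α⁽⁰⁾, α⁽¹⁾, α⁽²⁾ ∈ EuclideanSpace ℝ (Fin 3) satisfy: ‖ξ⁽⁰⁾‖ = ‖ξ⁽¹⁾‖ = ‖ξ⁽²⁾‖ = 1; α⁽¹⁾ = ξ⁽¹⁾; α⁽²⁾ = α⁽⁰⁾; ‖α⁽²⁾‖ = 1; and ⟨α⁽²⁾, ξ⁽¹⁾⟩ = ⟨α⁽²⁾, ξ⁽²⁾⟩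 = ⟨α⁽²⁾, ξ⁽⁰⁾⟩ = 0. Then 𝒢(α⁽¹⁾, ξ⁽¹⁾; α⁽²⁾, ξ⁽²⁾; α⁽⁰⁾, ξ⁽⁰⁾) = (λ + ℬ)·⟨ξ⁽²⁾, ξ⁽⁰⁾⟩ + (2μ + 𝒜/2)·⟨ξ⁽¹⁾, ξ⁽²⁾⟩·⟨ξ⁽¹⁾, ξ⁽⁰⁾⟩. -/
noncomputable section

open scoped RealInnerProductSpace

/-- The trilinear interaction form `𝒢` evaluated on the polarization vectors `α⁽ᵏ⁾`
and wave covectors `ξ⁽ᵏ⁾`, arising from the second-order linearization of the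
nonlinear elastic wave equation. -/
def calG (lam mu A B Cc : ℝ) (a1 x1 a2 x2 a0 x0 : EuclideanSpace ℝ (Fin 3)) : ℝ :=
  B * (⟪a1, x1⟫ * ⟪a2, x0⟫ * ⟪a0, x2⟫ + ⟪a2, x2⟫ * ⟪a1, x0⟫ * ⟪a0, x2⟫
      + ⟪a2, x0⟫ * ⟪a1, x0⟫ * ⟪a0, x2⟫)
  + (A / 4) * (⟪a2, x1⟫ * ⟪a1, x0⟫ * ⟪a0, x2⟫ + ⟪a1, x2⟫ * ⟪a2, x0⟫ * ⟪a0, x1⟫)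
  + (lam + B) * (⟪a1, x1⟫ * ⟪a2, a0⟫ * ⟪x2, x0⟫ + ⟪a2, x2⟫ * ⟪a1, a0⟫ * ⟪x1, x0⟫
      + ⟪a1, a2⟫ * ⟪x1, x0⟫ * ⟪a0, x0⟫)
  + 2 * Cc * (⟪a1, x1⟫ * ⟪a2, x2⟫ * ⟪a0, x0⟫)
  + (mu + A / 4) * (⟪a1, a2⟫ * ⟪x1, a0⟫ * ⟪x2, x0⟫
      + ⟪x1, x2⟫ * ⟪a1, a0⟫ * ⟪a2, x0⟫
      + ⟪a2, a1⟫ * ⟪x2, a0⟫ * ⟪x1, x0⟫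
      + ⟪a2, a0⟫ * ⟪a1, x0⟫ * ⟪x1, x2⟫
      + ⟪x1, a2⟫ * ⟪x2, x0⟫ * ⟪a1, a0⟫
      + ⟪x2, a1⟫ * ⟪x1, x0⟫ * ⟪a2, a0⟫)

theorem stmt_8 (lam mu A B Cc : ℝ)
    (x0 x1 x2 a0 a1 a2 : EuclideanSpace ℝ (Fin 3))
    (hx0 : ‖x0‖ = 1) (hx1 : ‖x1‖ = 1) (hx2 : ‖x2‖ = 1)
    (ha1 : a1 = x1) (ha20 : a2 = a0) (ha2 : ‖a2‖ = 1)
    (horth1 : ⟪a2, x1⟫ = 0) (horth2 : ⟪a2, x2⟫ = 0) (horth0 : ⟪a2, x0⟫ = 0) :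
    calG lam mu A B Cc a1 x1 a2 x2 a0 x0
      = (lam + B) * ⟪x2, x0⟫ + (2 * mu + A / 2) * (⟪x1, x2⟫ * ⟪x1, x0⟫) := by
  subst ha1 ha20
  have h11 : ⟪a1, a1⟫ = (1:ℝ) := by
    rw [real_inner_self_eq_norm_sq, hx1]; norm_num
  have haa : ⟪a2, a2⟫ = (1:ℝ) := by
    rw [real_inner_self_eq_norm_sq, ha2]; norm_num
  have h1 : ⟪a1, a2⟫ = 0 := by rw [real_inner_comm]; exact horth1
  have h2 : ⟪x2, a2⟫ = 0 := by rw [real_inner_comm]; exact horth2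
  have h0 : ⟪x0, a2⟫ = 0 := by rw [real_inner_comm]; exact horth0
  have h3 : ⟪x2, a1⟫ = ⟪a1, x2⟫ := real_inner_comm _ _
  simp only [calG, h3, h11, haa, h1, h2, h0, horth0, horth1, horth2]
  ring

end
end

section
/- Let c_S and c_P be real numbers with 0 < c_S < c_P, and let p, q ∈ ℝ. Suppose that p·⟨ξ⁽²⁾, ξ⁽⁰⁾⟩ + q·⟨ξ⁽¹⁾, ξ⁽²⁾⟩·⟨ξ⁽¹⁾, ξ⁽⁰⁾⟩ = 0 for every triple of unit vectors ξ⁽⁰⁾, ξ⁽¹⁾, ξ⁽²⁾ ∈ EuclideanSpace ℝ (Fin 3) such that ξ⁽⁰⁾ and ξ⁽²⁾ are linearly independent and the three vectors (c_S, ξ⁽⁰⁾), (c_P, ξ⁽¹⁾), (c_S, ξ⁽²⁾) are linearly dependent in ℝ × EuclideanSpace ℝ (Fin 3). Then p = 0 and q = 0. -/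
open scoped RealInnerProductSpace

/-!
Put `r = cP / cS > 1`. For unit vectors `ξ0, ξ2` with `⟪ξ0, ξ2⟫ = γ`, `|γ| < 1`, the vector
`ξ1 = α • ξ0 + β • ξ2` with `α + β = r` gives a dependent triple `(cS, ξ0), (cP, ξ1), (cS, ξ2)`,
and `ξ1` is a unit vector iff `α² + β² + 2αβγ = 1`. In that case
`⟪ξ1, ξ2⟫ ⟪ξ1, ξ0⟫ = γ + αβ (1 - γ²) = γ + (r² - 1)(1 + γ) / 2`, so the vanishing quantity is an
affine function of `γ` whose constant term is `q (r² - 1) / 2`. Two admissible values of `γ` make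
both coefficients vanish.
-/

theorem not_linearIndependent_of_eq_smul_add_smul {R M : Type*} [Ring R] [Nontrivial R]
    [AddCommGroup M] [Module R M] {u v w : M} (a b : R) (h : v = a • u + b • w) :
    ¬ LinearIndependent R ![u, v, w] := by
  intro hli
  have := Fintype.linearIndependent_iff.1 hli ![a, -1, b]
    (by simp [Fin.sum_univ_three, h]) 1
  simp at this

section InnerProductSpace

variable {E : Type*} [NormedAddCommGroup E] [InnerProductSpace ℝ E]

theorem linearIndependent_pair_of_abs_inner_lt_one {x y : E} (hx : ‖x‖ = 1) (hy : ‖y‖ = 1)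
    (h : |⟪x, y⟫| < 1) : LinearIndependent ℝ ![x, y] := by
  rw [LinearIndependent.pair_iff' (norm_ne_zero_iff.1 (hx ▸ one_ne_zero))]
  rintro a rfl
  rw [norm_smul, Real.norm_eq_abs, hx, mul_one] at hy
  rw [real_inner_smul_right, real_inner_self_eq_norm_sq, hx] at h
  simp [hy] at h

theorem norm_smul_add_smul_sq {x y : E} (hx : ‖x‖ = 1) (hy : ‖y‖ = 1) (a b : ℝ) :
    ‖a • x + b • y‖ ^ 2 = a ^ 2 + b ^ 2 + 2 * a * b * ⟪x, y⟫ := by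
  rw [norm_add_sq_real, norm_smul, norm_smul, real_inner_smul_left, real_inner_smul_right,
    hx, hy, Real.norm_eq_abs, Real.norm_eq_abs]
  simp only [mul_one, sq_abs]
  ring

theorem inner_smul_add_smul_mul_inner {x y : E} (hx : ‖x‖ = 1) (hy : ‖y‖ = 1) (a b : ℝ) :
    ⟪a • x + b • y, y⟫ * ⟪a • x + b • y, x⟫ =
      ⟪x, y⟫ * ‖a • x + b • y‖ ^ 2 + a * b * (1 - ⟪x, y⟫ ^ 2) := by
  rw [norm_smul_add_smul_sq hx hy]
  simp only [inner_add_left, real_inner_smul_left, real_inner_self_eq_norm_sq, hx, hy,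
    real_inner_comm x y]
  ring

theorem exists_norm_eq_one_inner_eq {e f : E} (he : ‖e‖ = 1) (hf : ‖f‖ = 1) (hef : ⟪e, f⟫ = 0)
    {γ : ℝ} (hγ : |γ| ≤ 1) : ∃ y : E, ‖y‖ = 1 ∧ ⟪e, y⟫ = γ := by
  have hγ2 : γ ^ 2 ≤ 1 := by nlinarith [abs_le.1 hγ]
  refine ⟨γ • e + √(1 - γ ^ 2) • f, ?_, ?_⟩
  · rw [← pow_eq_one_iff_of_nonneg (norm_nonneg _) two_ne_zero, norm_smul_add_smul_sq he hf, hef,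
      Real.sq_sqrt (by linarith)]
    ring
  · rw [inner_add_right, real_inner_smul_right, real_inner_smul_right, hef,
      real_inner_self_eq_norm_sq, he]
    ring

end InnerProductSpace

theorem affine_relation_of_forall_dependent {cS cP p q : ℝ}
    (h : ∀ ξ0 ξ1 ξ2 : EuclideanSpace ℝ (Fin 3),
      ‖ξ0‖ = 1 → ‖ξ1‖ = 1 → ‖ξ2‖ = 1 →
      LinearIndependent ℝ ![ξ0, ξ2] →
      ¬ LinearIndependent ℝ
        ![((cS, ξ0) : ℝ × EuclideanSpace ℝ (Fin 3)), (cP, ξ1), (cS, ξ2)] →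
      p * ⟪ξ2, ξ0⟫ + q * (⟪ξ1, ξ2⟫ * ⟪ξ1, ξ0⟫) = 0)
    {r α β γ : ℝ} (hr : r * cS = cP) (hγ : |γ| < 1) (hαβ : α + β = r)
    (hnorm : α ^ 2 + β ^ 2 + 2 * α * β * γ = 1) :
    (p + q * (r ^ 2 + 1) / 2) * γ + q * (r ^ 2 - 1) / 2 = 0 := by
  set x : EuclideanSpace ℝ (Fin 3) := EuclideanSpace.single 0 1
  have hx : ‖x‖ = 1 := by simp [x]
  obtain ⟨y, hy, hxy⟩ := exists_norm_eq_one_inner_eq hx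
    (f := EuclideanSpace.single 1 1) (by simp) (by simp [x, EuclideanSpace.inner_single_left]) hγ.le
  have hz : ‖α • x + β • y‖ = 1 := by
    rw [← pow_eq_one_iff_of_nonneg (norm_nonneg _) two_ne_zero, norm_smul_add_smul_sq hx hy,
      hxy, hnorm]
  have hdep : ((cP, α • x + β • y) : ℝ × EuclideanSpace ℝ (Fin 3)) =
      α • (cS, x) + β • (cS, y) := by
    ext1 <;> simp only [Prod.fst_add, Prod.snd_add, Prod.smul_fst, Prod.smul_snd, smul_eq_mul]
    linear_combination -hr - cS * hαβ
  have := h x (α • x + β • y) y hx hz hy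
    (linearIndependent_pair_of_abs_inner_lt_one hx hy (hxy ▸ hγ))
    (not_linearIndependent_of_eq_smul_add_smul α β hdep)
  rw [inner_smul_add_smul_mul_inner hx hy, hz, real_inner_comm, hxy] at this
  linear_combination this + q * (1 + γ) / 2 * hnorm - q * (1 + γ) * (α + β + r) / 2 * hαβ

theorem stmt_9 (cS cP : ℝ) (hS : 0 < cS) (hSP : cS < cP) (p q : ℝ)
    (h : ∀ ξ0 ξ1 ξ2 : EuclideanSpace ℝ (Fin 3),
      ‖ξ0‖ = 1 → ‖ξ1‖ = 1 → ‖ξ2‖ = 1 →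
      LinearIndependent ℝ ![ξ0, ξ2] →
      ¬ LinearIndependent ℝ
        ![((cS, ξ0) : ℝ × EuclideanSpace ℝ (Fin 3)), (cP, ξ1), (cS, ξ2)] →
      p * ⟪ξ2, ξ0⟫ + q * (⟪ξ1, ξ2⟫ * ⟪ξ1, ξ0⟫) = 0) :
    p = 0 ∧ q = 0 := by
  set r := cP / cS
  have hr : 1 < r := (one_lt_div hS).2 hSP
  have hrc : r * cS = cP := div_mul_cancel₀ _ hS.ne'
  have hr2 : 0 < r ^ 2 - 1 := by nlinarith
  have hr4 : 0 < 4 * r ^ 2 - 1 := by linarith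
  have e₁ := affine_relation_of_forall_dependent h (α := r / 2) (β := r / 2)
    (γ := (2 - r ^ 2) / r ^ 2) hrc
    (by
      rw [abs_lt, lt_div_iff₀ (by positivity), div_lt_one (by positivity)]
      constructor <;> linarith)
    (by ring) (by field_simp; ring)
  have e₂ := affine_relation_of_forall_dependent h (α := r / 2 + 1 / 4) (β := r / 2 - 1 / 4)
    (γ := (7 - 4 * r ^ 2) / (4 * r ^ 2 - 1)) hrc
    (by rw [abs_lt, lt_div_iff₀ hr4, div_lt_one hr4]; constructor <;> linarith)
    (by ring) (by field_simp [show r ^ 2 * 4 - 1 ≠ 0 by linarith]; ring)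
  have hγ : (2 - r ^ 2) / r ^ 2 ≠ (7 - 4 * r ^ 2) / (4 * r ^ 2 - 1) := by
    rw [ne_eq, div_eq_div_iff (by positivity) hr4.ne']
    intro heq
    linarith [show r ^ 2 = 1 by linear_combination heq / 2]
  have hA : p + q * (r ^ 2 + 1) / 2 = 0 :=
    mul_left_cancel₀ (sub_ne_zero.2 hγ) (by linear_combination e₁ - e₂)
  have hq : q = 0 := by
    rw [hA, zero_mul, zero_add] at e₁
    simpa [hr2.ne'] using e₁
  exact ⟨by linear_combination hA - (r ^ 2 + 1) / 2 * hq, hq⟩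
end

section
/- Let c_S and c_P be real numbers with 0 < c_S < c_P. Then there exist unit vectors ξ⁽⁰⁾, ξ⁽¹⁾, ξ⁽²⁾ ∈ EuclideanSpace ℝ (Fin 3) and nonzero real numbers κ₀, κ₁, κ₂ such that κ₀·(c_S, ξ⁽⁰⁾) + κ₁·(c_P, ξ⁽¹⁾) + κ₂·(c_S, ξ⁽²⁾) = 0 in ℝ × EuclideanSpace ℝ (Fin 3), and ξ⁽⁰⁾ and ξ⁽²⁾ are linearly independent. -/
/-!
With `a = c_S / c_P ∈ (0, 1)` and `b = √(1 - a²)`, the unit vectors `ξ⁽⁰⁾ = a e₀ + b e₁` and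
`ξ⁽²⁾ = a e₀ - b e₁` are linearly independent and sum to `2a e₀`. Hence
`ζ⁽⁰⁾ + ζ⁽²⁾ = (2 c_S, 2a e₀) = 2a (c_P, e₀)`, i.e. `(κ₀, κ₁, κ₂) = (1, -2a, 1)` with `ξ⁽¹⁾ = e₀`.
-/

open RealInnerProductSpace in
theorem norm_smul_add_smul_eq_one {E : Type*} [NormedAddCommGroup E] [InnerProductSpace ℝ E]
    {u v : E} (h : Orthonormal ℝ ![u, v]) {a b : ℝ}
    (hab : a ^ 2 + b ^ 2 = 1) : ‖a • u + b • v‖ = 1 := by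
  have hu : ‖u‖ = 1 := h.norm_eq_one 0
  have hv : ‖v‖ = 1 := h.norm_eq_one 1
  have huv : ⟪u, v⟫ = 0 := h.inner_eq_zero (i := 0) (j := 1) (by decide)
  rw [← pow_left_inj₀ (norm_nonneg _) zero_le_one two_ne_zero, one_pow, norm_add_sq_real,
    inner_smul_left, inner_smul_right, huv, norm_smul, norm_smul, mul_pow, mul_pow, hu, hv]
  simpa using hab

theorem LinearIndependent.smul_add_smul_smul_sub_smul {M : Type*} [AddCommGroup M] [Module ℝ M]
    {u v : M} (h : LinearIndependent ℝ ![u, v]) {a b : ℝ} (ha : a ≠ 0) (hb : b ≠ 0) :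
    LinearIndependent ℝ ![a • u + b • v, a • u - b • v] := by
  rw [LinearIndependent.pair_iff] at h ⊢
  intro s t hst
  obtain ⟨hsum, hdiff⟩ := h ((s + t) * a) ((s - t) * b) (by rw [← hst]; module)
  have hsum' : s + t = 0 := (mul_eq_zero.mp hsum).resolve_right ha
  have hdiff' : s - t = 0 := (mul_eq_zero.mp hdiff).resolve_right hb
  constructor <;> linarith

theorem stmt_10 (cS cP : ℝ) (hS : 0 < cS) (hSP : cS < cP) :
    ∃ (ξ0 ξ1 ξ2 : EuclideanSpace ℝ (Fin 3)) (κ0 κ1 κ2 : ℝ),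
      ‖ξ0‖ = 1 ∧ ‖ξ1‖ = 1 ∧ ‖ξ2‖ = 1 ∧
      κ0 ≠ 0 ∧ κ1 ≠ 0 ∧ κ2 ≠ 0 ∧
      κ0 • ((cS, ξ0) : ℝ × EuclideanSpace ℝ (Fin 3))
        + κ1 • ((cP, ξ1) : ℝ × EuclideanSpace ℝ (Fin 3))
        + κ2 • ((cS, ξ2) : ℝ × EuclideanSpace ℝ (Fin 3)) = 0 ∧
      LinearIndependent ℝ ![ξ0, ξ2] := by
  have hP : 0 < cP := hS.trans hSP
  set a := cS / cP
  have ha : 0 < a := div_pos hS hP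
  have ha_sq : a ^ 2 < 1 := by nlinarith [(div_lt_one hP).mpr hSP]
  set b := Real.sqrt (1 - a ^ 2)
  have hb : 0 < b := Real.sqrt_pos.mpr (by linarith)
  have hab : a ^ 2 + b ^ 2 = 1 := by rw [Real.sq_sqrt (by linarith)]; ring
  set u : EuclideanSpace ℝ (Fin 3) := EuclideanSpace.single 0 1
  set v : EuclideanSpace ℝ (Fin 3) := EuclideanSpace.single 1 1
  have huv : Orthonormal ℝ ![u, v] := by
    simp [u, v, EuclideanSpace.inner_single_left]
  refine ⟨a • u + b • v, u, a • u - b • v, 1, -2 * a, 1, norm_smul_add_smul_eq_one huv hab,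
    huv.norm_eq_one 0, ?_, one_ne_zero, by positivity, one_ne_zero, ?_,
    huv.linearIndependent.smul_add_smul_smul_sub_smul ha.ne' hb.ne'⟩
  · simpa [sub_eq_add_neg] using norm_smul_add_smul_eq_one huv (b := -b) (by rwa [neg_sq])
  · refine Prod.ext ?_ ?_
    · simp only [Prod.fst_add, Prod.smul_fst, smul_eq_mul, Prod.fst_zero, a]
      field_simp
      ring
    · simp only [Prod.snd_add, Prod.smul_snd, Prod.snd_zero]
      module
end
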